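/- The map g is not chaotic: for every δ > 0 there exist a point x ∈ [−1,1] and a nonempty open set V ⊆ [−1,1] such that no point y ∈ V satisfies both limsup_{n→∞} |gⁿ(x) − gⁿ(y)| ≥ δ and liminf_{n→∞} |gⁿ(x) − gⁿ(y)| = 0. (In particular, taking x to be the period-2 point −2/3, for every y in the open interval (0,1) the quantity liminf_{n→∞} |gⁿ(−2/3) − gⁿ(y)| is strictly positive.) -/
import Mathlib


open Filter

/-- The map `g : [-1,1] → [-1,1]` given by `g(x) = 2x + 2` on `[-1,-1/2]`,
`g(x) = -2x` on `[-1/2,0]`, and `g(x) = -x` on `[0,1]`. -/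
noncomputable def gMap (x : ℝ) : ℝ :=
  if x ≤ -(1 / 2) then 2 * x + 2 else if x ≤ 0 then -2 * x else -x

lemma gMap_val1 : gMap (-(2/3)) = 2/3 := by unfold gMap; norm_num

lemma gMap_val2 : gMap (2/3 : ℝ) = -(2/3) := by unfold gMap; norm_num

lemma gMap_mem1 (z : ℝ) (hz : z ∈ Set.Icc (0:ℝ) 1) : gMap z ∈ Set.Icc (-1:ℝ) 0 := by
  obtain ⟨h0, h1⟩ := hz; unfold gMap; split_ifs <;> constructor <;> linarith

lemma gMap_mem2 (z : ℝ) (hz : z ∈ Set.Icc (-1:ℝ) 0) : gMap z ∈ Set.Icc (0:ℝ) 1 := by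
  obtain ⟨h0, h1⟩ := hz; unfold gMap; split_ifs <;> constructor <;> linarith

lemma gMap_orbit (y : ℝ) (hy : y ∈ Set.Icc (0:ℝ) 1) (n : ℕ) :
    (gMap^[n] (-(2/3)) = -(2/3) ∧ gMap^[n] y ∈ Set.Icc (0:ℝ) 1) ∨
    (gMap^[n] (-(2/3)) = 2/3 ∧ gMap^[n] y ∈ Set.Icc (-1:ℝ) 0) := by
  induction n with
  | zero => exact Or.inl ⟨rfl, hy⟩
  | succ n ih =>
    rw [Function.iterate_succ_apply', Function.iterate_succ_apply']
    rcases ih with ⟨hx, hyn⟩ | ⟨hx, hyn⟩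
    · exact Or.inr ⟨by rw [hx, gMap_val1], gMap_mem1 _ hyn⟩
    · exact Or.inl ⟨by rw [hx, gMap_val2], gMap_mem2 _ hyn⟩

lemma gMap_dist (y : ℝ) (hy : y ∈ Set.Icc (0:ℝ) 1) (n : ℕ) :
    2/3 ≤ |gMap^[n] (-(2/3)) - gMap^[n] y| := by
  rcases gMap_orbit y hy n with ⟨hx, h0, h1⟩ | ⟨hx, h0, h1⟩
  · rw [hx, abs_sub_comm, le_abs]; left; linarith
  · rw [hx, le_abs]; left; linarith

lemma gMap_liminf (y : ℝ) (hy : y ∈ Set.Icc (0:ℝ) 1) :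
    0 < liminf (fun n => |gMap^[n] (-(2 / 3)) - gMap^[n] y|) atTop := by
  have hbd : IsBoundedUnder (· ≤ ·) atTop
      (fun n => |gMap^[n] (-(2 / 3)) - gMap^[n] y|) := by
    refine isBoundedUnder_of ⟨2, fun n => ?_⟩
    rcases gMap_orbit y hy n with ⟨hx, h0, h1⟩ | ⟨hx, h0, h1⟩ <;>
      rw [hx, abs_le] <;> constructor <;> linarith
  have : (2/3 : ℝ) ≤ liminf (fun n => |gMap^[n] (-(2 / 3)) - gMap^[n] y|) atTop := by
    refine le_liminf_of_le hbd.isCoboundedUnder_ge ?_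
    exact Eventually.of_forall fun n => by
      have := gMap_dist y hy n; norm_num at this ⊢; linarith
  linarith

/-- `g` is not chaotic: for every `δ > 0` there are a point `x ∈ [-1,1]` and a
nonempty (relatively) open subset `V` of `[-1,1]` such that no `y ∈ V` satisfies
both `limsup |gⁿx - gⁿy| ≥ δ` and `liminf |gⁿx - gⁿy| = 0`.  In particular, for
`x = -2/3` and every `y` in the open interval `(0,1)`,
`liminf |gⁿ(-2/3) - gⁿy| > 0`. -/
theorem gMap_not_chaotic :
    (∀ δ : ℝ, 0 < δ →
      ∃ x ∈ Set.Icc (-1 : ℝ) 1, ∃ V : Set ℝ, V ⊆ Set.Icc (-1 : ℝ) 1 ∧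
        (∃ U : Set ℝ, IsOpen U ∧ V = Set.Icc (-1 : ℝ) 1 ∩ U) ∧ V.Nonempty ∧
        ∀ y ∈ V, ¬ (δ ≤ limsup (fun n => |gMap^[n] x - gMap^[n] y|) atTop ∧
          liminf (fun n => |gMap^[n] x - gMap^[n] y|) atTop = 0)) ∧
    (∀ y ∈ Set.Ioo (0 : ℝ) 1,
      0 < liminf (fun n => |gMap^[n] (-(2 / 3)) - gMap^[n] y|) atTop) := by
  constructor
  · intro δ hδ
    refine ⟨-(2/3), by norm_num, Set.Ioo 0 1, fun z hz => ⟨by linarith [hz.1], le_of_lt hz.2⟩,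
      ⟨Set.Ioo 0 1, isOpen_Ioo, ?_⟩, ⟨1/2, by norm_num⟩, ?_⟩
    · symm
      exact Set.inter_eq_self_of_subset_right fun z hz => ⟨by linarith [hz.1], le_of_lt hz.2⟩
    · rintro y hy ⟨-, h2⟩
      have := gMap_liminf y ⟨le_of_lt hy.1, le_of_lt hy.2⟩
      rw [h2] at this
      exact lt_irrefl 0 this
  · intro y hy
    exact gMap_liminf y ⟨le_of_lt hy.1, le_of_lt hy.2⟩
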